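/- With the same setup as the monotonicity lemma (f, G, Δ, h as defined from γ₊ ≥ 0, γ₋ > 0, μ ∈ ℝ, and (z_n) a sequence in (0,1) satisfying the recursion (n+2)(f(z_{n+1}) − f(z_n)) = n(G(z_n) − G(z_{n−1})) + Δ(z_n) for n ≥ 1 and 2(f(z_1)−f(z_0)) = Δ(z_0)): if h(z_0) < γ₋ − γ₊ − μ, then (z_n) is strictly decreasing: z_0 > z_1 > z_2 > ... > 0. -/

import Mathlib

noncomputable def f (γp γm x : ℝ) : ℝ := γm * x + γp * Real.log x
noncomputable def G (γp γm x : ℝ) : ℝ := γm * Real.log x - γp / x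
noncomputable def Δ (γp γm μ x : ℝ) : ℝ :=
  γp + γm - γp / x - γm * x + (γm - γp - μ) * Real.log x
noncomputable def h (γp γm x : ℝ) : ℝ := (γm * x + γp / x - (γp + γm)) / Real.log x

/-!
By induction, `z (n + 1) < z n` and `z (n + 1) ≤ z 0`. Since `h` is increasing on `(0,1)`,
`h (z n) ≤ h (z 0) < γ₋ − γ₊ − μ`, which makes `Δ (z n)` negative; since `G` is increasing,
the memory term `n (G (z n) − G (z (n − 1)))` is nonpositive. The recursion then forces
`f (z (n + 1)) < f (z n)`, and `f` is increasing.
-/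

open Real Set

section

variable {γp γm : ℝ}

lemma f_strictMonoOn (hγp : 0 ≤ γp) (hγm : 0 < γm) : StrictMonoOn (f γp γm) (Ioi 0) := by
  intro a ha b _ hab
  have := mul_le_mul_of_nonneg_left (log_le_log ha hab.le) hγp
  have := mul_lt_mul_of_pos_left hab hγm
  unfold f
  linarith

lemma G_monotoneOn (hγp : 0 ≤ γp) (hγm : 0 ≤ γm) : MonotoneOn (G γp γm) (Ioi 0) := by
  intro a ha b _ hab
  have := mul_le_mul_of_nonneg_left (log_le_log ha hab) hγm
  have := div_le_div_of_nonneg_left hγp ha hab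
  unfold G
  linarith

lemma Δ_neg_of_h_lt {μ x : ℝ} (hx : x ∈ Ioo 0 1) (hhx : h γp γm x < γm - γp - μ) :
    Δ γp γm μ x < 0 := by
  rw [h, div_lt_iff_of_neg (log_neg hx.1 hx.2)] at hhx
  unfold Δ
  linarith

lemma hasDerivAt_h {x : ℝ} (hx0 : 0 < x) (hx1 : x ≠ 1) :
    HasDerivAt (h γp γm)
      ((γm * (log x - 1 + x⁻¹) + γp * (x - 1 - log x) / x ^ 2) / log x ^ 2) x := by
  have hlog : log x ≠ 0 := log_ne_zero_of_pos_of_ne_one hx0 hx1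
  have hnum : HasDerivAt (fun y => γm * y + γp / y - (γp + γm)) (γm - γp / x ^ 2) x := by
    refine ((((hasDerivAt_id' x).const_mul γm).add
      ((hasDerivAt_const x γp).div (hasDerivAt_id' x) hx0.ne')).sub_const (γp + γm)).congr_deriv ?_
    field_simp
    ring
  show HasDerivAt (fun y => (γm * y + γp / y - (γp + γm)) / log y) _ x
  refine (hnum.div (hasDerivAt_log hx0.ne') hlog).congr_deriv ?_
  field_simp
  ring

lemma h_strictMonoOn (hγp : 0 ≤ γp) (hγm : 0 < γm) : StrictMonoOn (h γp γm) (Ioo 0 1) := by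
  have hderiv : ∀ x ∈ Ioo (0 : ℝ) 1, HasDerivAt (h γp γm) _ x :=
    fun x hx => hasDerivAt_h (γp := γp) (γm := γm) hx.1 hx.2.ne
  apply strictMonoOn_of_hasDerivWithinAt_pos (convex_Ioo 0 1)
    (fun x hx => (hderiv x hx).continuousAt.continuousWithinAt)
  · rw [interior_Ioo]
    exact fun x hx => (hderiv x hx).hasDerivWithinAt
  · rw [interior_Ioo]
    rintro x ⟨hx0, hx1⟩
    -- both terms of the numerator come from `log y < y - 1` (for `y = x` and `y = x⁻¹`)
    have hlog_inv : -log x < x⁻¹ - 1 := by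
      simpa [log_inv] using log_lt_sub_one_of_pos (inv_pos.2 hx0) (by simpa using hx1.ne)
    have hlog : log x < x - 1 := log_lt_sub_one_of_pos hx0 hx1.ne
    have hlog_neg := log_neg hx0 hx1
    have : 0 < γm * (log x - 1 + x⁻¹) := mul_pos hγm (by linarith)
    have : 0 ≤ γp * (x - 1 - log x) / x ^ 2 := by
      apply div_nonneg (mul_nonneg hγp (by linarith)) (by positivity)
    exact div_pos (by linarith) (sq_pos_of_neg hlog_neg)

lemma lt_of_recursion_step (hγp : 0 ≤ γp) (hγm : 0 < γm) {μ n a b c : ℝ} (hn : 0 ≤ n)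
    (hb : 0 < b) (hc : 0 < c) (hba : b ≤ a) (hΔ : Δ γp γm μ b < 0)
    (hrec : (n + 2) * (f γp γm c - f γp γm b) = n * (G γp γm b - G γp γm a) + Δ γp γm μ b) :
    c < b := by
  have hG : n * (G γp γm b - G γp γm a) ≤ 0 :=
    mul_nonpos_of_nonneg_of_nonpos hn
      (sub_nonpos.2 (G_monotoneOn hγp hγm.le hb (hb.trans_le hba) hba))
  have hf : f γp γm c - f γp γm b < 0 := by
    refine neg_of_mul_neg_right ?_ (by linarith : (0 : ℝ) ≤ n + 2)
    linarith
  exact (f_strictMonoOn hγp hγm).lt_iff_lt hc hb |>.mp (sub_neg.1 hf)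

end

/-- Monotonicity lemma (strictly decreasing case): if `h(z_0) < γ₋ − γ₊ − μ`,
any solution of the Lagrange recursion with values in `(0,1)` is strictly
decreasing. -/
theorem zseq_strictAnti (γp γm μ : ℝ) (hγp : 0 ≤ γp) (hγm : 0 < γm)
    (z : ℕ → ℝ) (hz : ∀ n, z n ∈ Set.Ioo (0 : ℝ) 1)
    (hrec0 : 2 * (f γp γm (z 1) - f γp γm (z 0)) = Δ γp γm μ (z 0))
    (hrec : ∀ n : ℕ, 1 ≤ n →
      ((n : ℝ) + 2) * (f γp γm (z (n + 1)) - f γp γm (z n))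
        = (n : ℝ) * (G γp γm (z n) - G γp γm (z (n - 1))) + Δ γp γm μ (z n))
    (hh : h γp γm (z 0) < γm - γp - μ) :
    StrictAnti z := by
  have hΔ : ∀ n, z n ≤ z 0 → Δ γp γm μ (z n) < 0 := fun n hn =>
    Δ_neg_of_h_lt (hz n) (((h_strictMonoOn hγp hγm).monotoneOn (hz n) (hz 0) hn).trans_lt hh)
  have hstep : ∀ n, z (n + 1) < z n ∧ z (n + 1) ≤ z 0 := by
    intro n
    induction n with
    | zero =>
      have hlt : z 1 < z 0 := lt_of_recursion_step hγp hγm le_rfl (hz 0).1 (hz 1).1 le_rfl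
        (hΔ 0 le_rfl) (by linear_combination hrec0)
      exact ⟨hlt, hlt.le⟩
    | succ n ih =>
      have hlt : z (n + 2) < z (n + 1) := lt_of_recursion_step hγp hγm (Nat.cast_nonneg (n + 1))
        (hz _).1 (hz _).1 ih.1.le (hΔ _ ih.2)
        (by simpa only [Nat.add_sub_cancel] using hrec (n + 1) le_add_self)
      exact ⟨hlt, hlt.le.trans ih.2⟩
  exact strictAnti_nat_of_succ_lt fun n => (hstep n).1
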